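/- Let K be a differential field and A ∈ Mat_{ℓ×ℓ} K((∂⁻¹)) a matrix pseudodifferential operator all of whose entries have order at most N, such that the matrix A_N ∈ Mat_{ℓ×ℓ} K of coefficients of ∂^N is invertible. Then the Dieudonné determinant of A equals det(A_N) λ^{Nℓ}. -/

import Mathlib

/-- An axiomatization of the ring `R((∂⁻¹))` of pseudodifferential operators over a
commutative differential ring `(R, δ)`: elements are determined by their coefficients
`coeff A : ℤ → R` (supported in a half-line `n ≤ N`), with the product determined by
`∂ⁿ ∘ a = Σ_{j≥0} binom(n,j) δʲ(a) ∂^{n-j}`, equivalently by the symbol formula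
`coeff (A∘B) k = Σ_{m+n-j=k} binom(m,j) aₘ δʲ(bₙ)`. -/
structure PseudoDiffOps (R : Type) [CommRing R] (δ : R → R) : Type 1 where
  carrier : Type
  [ringCarrier : Ring carrier]
  /-- the embedding of `R` as the operators of order `≤ 0` with only a constant term -/
  const : R →+* carrier
  /-- the derivation `∂` as an element of the ring -/
  d : carrier
  /-- the element `∂⁻¹` -/
  dinv : carrier
  δ_add : ∀ a b : R, δ (a + b) = δ a + δ b
  δ_leibniz : ∀ a b : R, δ (a * b) = δ a * b + a * δ b
  /-- `coeff A n` is the coefficient of `∂ⁿ` in `A` -/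
  coeff : carrier → ℤ → R
  coeff_injective : Function.Injective coeff
  coeff_add : ∀ A B n, coeff (A + B) n = coeff A n + coeff B n
  coeff_one : ∀ n, coeff 1 n = if n = 0 then 1 else 0
  coeff_const : ∀ (a : R) (n), coeff (const a) n = if n = 0 then a else 0
  coeff_d : ∀ n, coeff d n = if n = 1 then 1 else 0
  coeff_dinv : ∀ n, coeff dinv n = if n = -1 then 1 else 0
  d_dinv : d * dinv = 1
  dinv_d : dinv * d = 1
  coeff_bddAbove : ∀ A, ∃ N : ℤ, ∀ n, N < n → coeff A n = 0
  exists_of_coeffs : ∀ f : ℤ → R, (∃ N : ℤ, ∀ n, N < n → f n = 0) → ∃ A, coeff A = f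
  coeff_mul : ∀ (A B : carrier) (NA NB k : ℤ),
    (∀ n, NA < n → coeff A n = 0) → (∀ n, NB < n → coeff B n = 0) →
    coeff (A * B) k =
      ∑ m ∈ Finset.Icc (k - NB) NA, ∑ j ∈ Finset.range ((NB - k + m).toNat + 1),
        ((Ring.choose m j : ℤ) : R) * (coeff A m * δ^[j] (coeff B (k + j - m)))

attribute [instance] PseudoDiffOps.ringCarrier

namespace PseudoDiffOps

variable {R : Type} [CommRing R] {δ : R → R} (P : PseudoDiffOps R δ)

/-- the order of a pseudodifferential operator: the largest `n` with `coeff A n ≠ 0`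
(junk value for `A = 0`). -/
noncomputable def ord (A : P.carrier) : ℤ := sSup {n : ℤ | P.coeff A n ≠ 0}

/-- the leading coefficient of a pseudodifferential operator -/
noncomputable def leadCoeff (A : P.carrier) : R := P.coeff A (P.ord A)

/-- `A` is a differential operator, i.e. lies in `R[∂] ⊆ R((∂⁻¹))` -/
def IsDiffOp (A : P.carrier) : Prop := ∀ n : ℤ, n < 0 → P.coeff A n = 0

/-- `A` is monic, i.e. has leading coefficient `1` -/
noncomputable def Monic (A : P.carrier) : Prop := P.leadCoeff A = 1

end PseudoDiffOps

/-- `Det` is a Dieudonné determinant on `ℓ×ℓ` matrices over `K((∂⁻¹))`: writing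
`Det A = (c, d)` for `det A = c λ^d` (with `c = 0` encoding `det A = 0`), it changes
sign under a transposition of two rows, is unchanged when a left multiple of one row is
subtracted from another row, and on an upper triangular matrix with nonzero diagonal
entries of orders `nᵢ` and leading coefficients `aᵢ` it equals `(∏ aᵢ, Σ nᵢ)`, while it
vanishes if some diagonal entry is zero. -/
noncomputable def PseudoDiffOps.IsDieudonneDet {K : Type} [CommRing K] {δ : K → K}
    (P : PseudoDiffOps K δ) (ℓ : ℕ)
    (Det : Matrix (Fin ℓ) (Fin ℓ) P.carrier → K × ℤ) : Prop :=
  (∀ (M : Matrix (Fin ℓ) (Fin ℓ) P.carrier) (i j : Fin ℓ), i ≠ j →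
    Det (M.submatrix (Equiv.swap i j) id) = (-(Det M).1, (Det M).2)) ∧
  (∀ (M : Matrix (Fin ℓ) (Fin ℓ) P.carrier) (i j : Fin ℓ) (Q : P.carrier), i ≠ j →
    Det (M.updateRow j (fun c => M j c - Q * M i c)) = Det M) ∧
  (∀ M : Matrix (Fin ℓ) (Fin ℓ) P.carrier, (∀ i j : Fin ℓ, j < i → M i j = 0) →
    ((∀ i, M i i ≠ 0) →
      Det M = (∏ i, P.leadCoeff (M i i), ∑ i, P.ord (M i i))) ∧
    ((∃ i, M i i = 0) → (Det M).1 = 0))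

/-! Gaussian elimination over the skew field `K((∂⁻¹))`, keeping track of the matrix `A_N` of
`∂^N`-coefficients. Swapping two rows, and subtracting from row `i` the multiple `Q` of a
pivot row `c` with `Q = A i c · (A c c)⁻¹` of order `≤ 0`, keep all entries of order `≤ N` and
act on `A_N` by the corresponding elementary row operation over `K`, so `det A_N` changes
exactly as the Dieudonné determinant does. Since `A_N` stays invertible, the current column
always has a pivot whose `∂^N`-coefficient is nonzero, hence which is invertible in
`K((∂⁻¹))`. At the end the matrix is upper triangular with diagonal entries of order exactly
`N`, and the normalization gives `∏ aᵢ λ^{Nℓ} = det(A_N) λ^{Nℓ}`. -/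

namespace PseudoDiffOps

section CommRing

variable {R : Type} [CommRing R]

section Coeff

variable {δ : R → R} (P : PseudoDiffOps R δ)

def OrdLE (A : P.carrier) (N : ℤ) : Prop := ∀ n, N < n → P.coeff A n = 0

@[simp]
lemma coeff_zero (n : ℤ) : P.coeff 0 n = 0 := by
  simpa using (P.coeff_add 0 0 n).symm

lemma coeff_neg (A : P.carrier) (n : ℤ) : P.coeff (-A) n = -P.coeff A n := by
  rw [eq_neg_iff_add_eq_zero, ← P.coeff_add, neg_add_cancel, coeff_zero]

lemma coeff_sub (A B : P.carrier) (n : ℤ) :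
    P.coeff (A - B) n = P.coeff A n - P.coeff B n := by
  rw [sub_eq_add_neg, P.coeff_add, P.coeff_neg, sub_eq_add_neg]

variable {P}

lemma OrdLE.sub {A B : P.carrier} {N : ℤ} (hA : P.OrdLE A N) (hB : P.OrdLE B N) :
    P.OrdLE (A - B) N := fun n hn => by rw [P.coeff_sub, hA n hn, hB n hn, sub_zero]

lemma OrdLE.mul {A B : P.carrier} {NA NB : ℤ} (hA : P.OrdLE A NA) (hB : P.OrdLE B NB) :
    P.OrdLE (A * B) (NA + NB) := fun k hk => by
  rw [P.coeff_mul A B NA NB k hA hB, Finset.Icc_eq_empty (by omega), Finset.sum_empty]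

lemma coeff_mul_add {A B : P.carrier} {NA NB : ℤ} (hA : P.OrdLE A NA) (hB : P.OrdLE B NB) :
    P.coeff (A * B) (NA + NB) = P.coeff A NA * P.coeff B NB := by
  rw [P.coeff_mul A B NA NB _ hA hB, add_sub_cancel_right, Finset.Icc_self,
    Finset.sum_singleton, show (NB - (NA + NB) + NA).toNat = 0 by omega]
  simp

lemma ord_eq_of_coeff_ne_zero {A : P.carrier} {N : ℤ} (hA : P.OrdLE A N)
    (hN : P.coeff A N ≠ 0) : P.ord A = N := by
  have hub : ∀ n ∈ {n : ℤ | P.coeff A n ≠ 0}, n ≤ N := fun n hn =>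
    not_lt.mp fun h => hn (hA n h)
  exact le_antisymm (csSup_le ⟨N, hN⟩ hub) (le_csSup ⟨N, hub⟩ hN)

lemma leadCoeff_eq_of_coeff_ne_zero {A : P.carrier} {N : ℤ} (hA : P.OrdLE A N)
    (hN : P.coeff A N ≠ 0) : P.leadCoeff A = P.coeff A N := by
  rw [leadCoeff, ord_eq_of_coeff_ne_zero hA hN]

lemma coeff_mul_neg_natCast {A B : P.carrier} {N : ℤ} (hB : P.OrdLE B (-N))
    (hA : P.OrdLE A N) (t : ℕ) :
    P.coeff (B * A) (-t) =
      ∑ s ∈ Finset.range (t + 1), ∑ j ∈ Finset.range (t - s + 1),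
        ((Ring.choose (-N - s) j : ℤ) : R) *
          (P.coeff B (-N - s) * δ^[j] (P.coeff A (N + s + j - t))) := by
  rw [P.coeff_mul B A (-N) N _ hB hA]
  refine Finset.sum_nbij' (fun m => (-N - m).toNat) (fun s => -N - s) ?_ ?_ ?_ ?_ ?_
  · intro m hm
    simp only [Finset.mem_Icc, Finset.mem_range] at hm ⊢
    omega
  · intro s hs
    simp only [Finset.mem_Icc, Finset.mem_range] at hs ⊢
    omega
  · intro m hm
    rw [Finset.mem_Icc] at hm
    omega
  · intro s hs
    rw [Finset.mem_range] at hs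
    omega
  · intro m hm
    rw [Finset.mem_Icc] at hm
    obtain ⟨s, rfl⟩ : ∃ s : ℕ, m = -N - s := ⟨(-N - m).toNat, by omega⟩
    rw [show (-N - (-N - (s : ℤ))).toNat = s by omega,
      show (N - -(t : ℤ) + (-N - s)).toNat = t - s by omega]
    refine Finset.sum_congr rfl fun j _ => ?_
    rw [show -(t : ℤ) + j - (-N - s) = N + s + j - t by ring]

end Coeff

/-- The coefficient of `∂^(-N-t)` in the left inverse of an operator of order `N` with
coefficients `a`, determined recursively by the vanishing of the coefficient of `∂^(-t)` in
the product. -/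
noncomputable def invCoeff (δ : R → R) (a : ℤ → R) (N : ℤ) (t : ℕ) : R :=
  ((if t = 0 then 1 else 0) - ∑ s : Fin t, ∑ j ∈ Finset.range (t - s + 1),
      ((Ring.choose (-N - s) j : ℤ) : R) * (invCoeff δ a N s * δ^[j] (a (N + s + j - t)))) *
    Ring.inverse (a N)

lemma invCoeff_mul_lead {δ : R → R} {a : ℤ → R} {N : ℤ} (ha : IsUnit (a N)) (t : ℕ) :
    invCoeff δ a N t * a N = (if t = 0 then 1 else 0) - ∑ s ∈ Finset.range t,
      ∑ j ∈ Finset.range (t - s + 1),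
        ((Ring.choose (-N - s) j : ℤ) : R) * (invCoeff δ a N s * δ^[j] (a (N + s + j - t))) := by
  rw [invCoeff, Ring.inverse_mul_cancel_right _ _ ha, ← Fin.sum_univ_eq_sum_range]

variable {δ : R → R} {P : PseudoDiffOps R δ}

lemma exists_mul_eq_one {A : P.carrier} {N : ℤ} (hA : P.OrdLE A N)
    (hN : IsUnit (P.coeff A N)) : ∃ B : P.carrier, B * A = 1 ∧ P.OrdLE B (-N) := by
  obtain ⟨B, hB⟩ := P.exists_of_coeffs
    (fun n => if n ≤ -N then invCoeff δ (P.coeff A) N (-N - n).toNat else 0)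
    ⟨-N, fun n hn => if_neg (by omega)⟩
  have hBN : P.OrdLE B (-N) := fun n hn => by rw [hB]; exact if_neg (by omega)
  have hBs (s : ℕ) : P.coeff B (-N - s) = invCoeff δ (P.coeff A) N s := by
    simp only [hB]; rw [if_pos (by omega), show (-N - (-N - s)).toNat = s by omega]
  refine ⟨B, P.coeff_injective (funext fun k => ?_), hBN⟩
  rw [P.coeff_one]
  obtain hk | ⟨t, rfl⟩ : 0 < k ∨ ∃ t : ℕ, k = -t := by
    rcases le_or_gt k 0 with h | h
    · exact Or.inr ⟨(-k).toNat, by omega⟩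
    · exact Or.inl h
  · rw [(hBN.mul hA) k (by omega), if_neg hk.ne']
  · have hlast : ∑ j ∈ Finset.range (t - t + 1), ((Ring.choose (-N - t) j : ℤ) : R) *
          (P.coeff B (-N - t) * δ^[j] (P.coeff A (N + t + j - t))) =
        invCoeff δ (P.coeff A) N t * P.coeff A N := by
      simp [hBs]
    rw [coeff_mul_neg_natCast hBN hA, Finset.sum_range_succ, hlast, invCoeff_mul_lead hN]
    simp only [hBs, neg_eq_zero, Nat.cast_eq_zero, add_sub_cancel]

end CommRing

end PseudoDiffOps

lemma Matrix.exists_le_apply_ne_zero_of_det_ne_zero {n R : Type*} [Fintype n] [LinearOrder n]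
    [CommRing R] {L : Matrix n n R} (hdet : L.det ≠ 0) (c : n)
    (hL : ∀ i j, j < i → j < c → L i j = 0) : ∃ i, c ≤ i ∧ L i c ≠ 0 := by
  by_contra! hc
  rw [Matrix.det_apply'] at hdet
  obtain ⟨σ, -, hσ⟩ := Finset.exists_ne_zero_of_sum_ne_zero hdet
  have hσ_ne (j : n) : L (σ j) j ≠ 0 := fun h =>
    hσ (by rw [Finset.prod_eq_zero (f := fun i => L (σ i) i) (Finset.mem_univ j) h,
      mul_zero])
  -- the columns `j ≤ c` vanish in the rows `i ≥ c`, so `σ` would inject `{j ≤ c}` into `{i < c}`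
  have hmaps (j : n) (hj : j ≤ c) : σ j < c := by
    by_contra! hcj
    refine hσ_ne j ?_
    rcases hj.lt_or_eq with hj | rfl
    · exact hL _ _ (hj.trans_le hcj) hj
    · exact hc _ hcj
  have hcard := Finset.card_le_card_of_injOn σ (s := {j | j ≤ c}) (t := {i | i < c})
    (fun j hj => by simpa using hmaps j (by simpa using hj)) σ.injective.injOn
  refine (Finset.card_lt_card ?_).not_ge hcard
  refine (Finset.ssubset_iff_of_subset fun i hi => ?_).mpr ⟨c, by simp, by simp⟩
  simp only [Finset.mem_filter, Finset.mem_univ, true_and] at hi ⊢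
  exact hi.le

namespace PseudoDiffOps

section Matrix

variable {R : Type} [CommRing R] {δ : R → R} (P : PseudoDiffOps R δ)

def coeffMatrix {m n : Type*} (M : Matrix m n P.carrier) (N : ℤ) : Matrix m n R :=
  Matrix.of fun i j => P.coeff (M i j) N

variable {P} {m : Type*} [DecidableEq m] {M : Matrix m m P.carrier} {N : ℤ} {i c : m}
  {Q : P.carrier}

lemma ordLE_updateRow_sub_mul (hM : ∀ i j, P.OrdLE (M i j) N) (hQ : P.OrdLE Q 0) (i' j : m) :
    P.OrdLE ((M.updateRow i fun j => M i j - Q * M c j) i' j) N := by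
  rcases eq_or_ne i' i with rfl | hi'
  · simpa using (hM i' j).sub (by simpa using hQ.mul (hM c j))
  · simpa [hi'] using hM i' j

lemma coeffMatrix_updateRow_sub_mul (hQ : P.OrdLE Q 0) (hc : ∀ j, P.OrdLE (M c j) N) :
    P.coeffMatrix (M.updateRow i fun j => M i j - Q * M c j) N =
      (P.coeffMatrix M N).updateRow i
        (P.coeffMatrix M N i + (-P.coeff Q 0) • P.coeffMatrix M N c) := by
  ext i' j
  rcases eq_or_ne i' i with rfl | hi'
  · have := coeff_mul_add hQ (hc j)
    rw [zero_add] at this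
    simp only [coeffMatrix, Matrix.updateRow_self, Matrix.of_apply, coeff_sub, this,
      Pi.add_apply, Pi.smul_apply, smul_eq_mul]
    ring
  · simp [coeffMatrix, hi']

variable [Fintype m]

lemma det_coeffMatrix_updateRow_sub_mul (hic : i ≠ c) (hQ : P.OrdLE Q 0)
    (hc : ∀ j, P.OrdLE (M c j) N) :
    (P.coeffMatrix (M.updateRow i fun j => M i j - Q * M c j) N).det =
      (P.coeffMatrix M N).det := by
  rw [coeffMatrix_updateRow_sub_mul hQ hc, Matrix.det_updateRow_add_smul_self _ hic]

lemma det_coeffMatrix_swap (hic : i ≠ c) :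
    (P.coeffMatrix (M.submatrix (Equiv.swap i c) id) N).det = -(P.coeffMatrix M N).det := by
  rw [show P.coeffMatrix (M.submatrix (Equiv.swap i c) id) N =
    (P.coeffMatrix M N).submatrix (Equiv.swap i c) id from rfl, Matrix.det_permute,
    Equiv.Perm.sign_swap hic]
  simp

end Matrix

end PseudoDiffOps

namespace PseudoDiffOps.IsDieudonneDet

section CommRing

variable {R : Type} [CommRing R] {δ : R → R} {P : PseudoDiffOps R δ} {ℓ : ℕ}
  {Det : Matrix (Fin ℓ) (Fin ℓ) P.carrier → R × ℤ} {M : Matrix (Fin ℓ) (Fin ℓ) P.carrier}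
  {N : ℤ}

lemma eq_det_coeffMatrix_of_upperTriangular (hDet : P.IsDieudonneDet ℓ Det)
    (hM : ∀ i j, P.OrdLE (M i j) N) (hdet : (P.coeffMatrix M N).det ≠ 0)
    (htri : ∀ i j : Fin ℓ, j < i → M i j = 0) :
    Det M = ((P.coeffMatrix M N).det, N * ℓ) := by
  have hdet_eq : (P.coeffMatrix M N).det = ∏ i, P.coeff (M i i) N :=
    Matrix.det_of_isUpperTriangular fun i j hji => by simp [coeffMatrix, htri i j hji]
  have hdiag (i : Fin ℓ) : P.coeff (M i i) N ≠ 0 := fun h =>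
    hdet (hdet_eq ▸ Finset.prod_eq_zero (Finset.mem_univ i) h)
  rw [(hDet.2.2 M htri).1 fun i h => hdiag i (by simp [h]), hdet_eq]
  simp [leadCoeff_eq_of_coeff_ne_zero (hM _ _) (hdiag _),
    ord_eq_of_coeff_ne_zero (hM _ _) (hdiag _), mul_comm]

lemma eq_det_coeffMatrix_of_swap (hDet : P.IsDieudonneDet ℓ Det) {i c : Fin ℓ} (hic : i ≠ c)
    (h : Det (M.submatrix (Equiv.swap i c) id) =
      ((P.coeffMatrix (M.submatrix (Equiv.swap i c) id) N).det, N * ℓ)) :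
    Det M = ((P.coeffMatrix M N).det, N * ℓ) := by
  rw [hDet.1 M i c hic, det_coeffMatrix_swap hic, Prod.mk.injEq, neg_inj] at h
  exact Prod.ext h.1 h.2

lemma eq_det_coeffMatrix_of_pivot (hDet : P.IsDieudonneDet ℓ Det) {c : Fin ℓ}
    (hnext : ∀ M : Matrix (Fin ℓ) (Fin ℓ) P.carrier, (∀ i j, P.OrdLE (M i j) N) →
      (P.coeffMatrix M N).det ≠ 0 → (∀ i j, j < i → j ≤ c → M i j = 0) →
      Det M = ((P.coeffMatrix M N).det, N * ℓ))
    (S : Finset (Fin ℓ)) (hM : ∀ i j, P.OrdLE (M i j) N) (hdet : (P.coeffMatrix M N).det ≠ 0)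
    (hcleared : ∀ i j, j < i → j < c → M i j = 0) (hpivot : IsUnit (P.coeff (M c c) N))
    (hS : ∀ i, c < i → i ∉ S → M i c = 0) :
    Det M = ((P.coeffMatrix M N).det, N * ℓ) := by
  induction S using Finset.induction_on generalizing M with
  | empty =>
    refine hnext M hM hdet fun i j hji hjc => ?_
    rcases hjc.lt_or_eq with hjc | rfl
    · exact hcleared i j hji hjc
    · exact hS i hji (Finset.notMem_empty i)
  | insert i S _ ih =>
    rcases eq_or_ne i c with rfl | hic
    · exact ih hM hdet hcleared hpivot fun i' hi' hS' =>
        hS i' hi' (by simp [hS', hi'.ne'])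
    -- `B` is a left inverse of the pivot, so subtracting `M i c * B` times row `c` kills `M i c`
    obtain ⟨B, hBM, hB⟩ := exists_mul_eq_one (hM c c) hpivot
    have hQ : P.OrdLE (M i c * B) 0 := by simpa using (hM i c).mul hB
    have hdet' := det_coeffMatrix_updateRow_sub_mul hic hQ (hM c)
    rw [← hDet.2.1 M c i _ hic.symm, ← hdet']
    refine ih (ordLE_updateRow_sub_mul hM hQ) (hdet' ▸ hdet) (fun i' j hji hjc => ?_)
      (by simpa [hic.symm] using hpivot) (fun i' hi' hS' => ?_)
    · rcases eq_or_ne i' i with rfl | hi'i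
      · simp [hcleared i' j hji hjc, hcleared c j hjc hjc]
      · simpa [hi'i] using hcleared i' j hji hjc
    · rcases eq_or_ne i' i with rfl | hi'i
      · simp [mul_assoc, hBM]
      · simpa [hi'i] using hS i' hi' (by simp [hS', hi'i])

end CommRing

section Field

variable {K : Type} [Field K] {δ : K → K} {P : PseudoDiffOps K δ} {ℓ : ℕ}
  {Det : Matrix (Fin ℓ) (Fin ℓ) P.carrier → K × ℤ} {M : Matrix (Fin ℓ) (Fin ℓ) P.carrier}
  {N : ℤ}

lemma eq_det_coeffMatrix_of_column (hDet : P.IsDieudonneDet ℓ Det) {c : Fin ℓ}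
    (hnext : ∀ M : Matrix (Fin ℓ) (Fin ℓ) P.carrier, (∀ i j, P.OrdLE (M i j) N) →
      (P.coeffMatrix M N).det ≠ 0 → (∀ i j, j < i → j ≤ c → M i j = 0) →
      Det M = ((P.coeffMatrix M N).det, N * ℓ))
    (hM : ∀ i j, P.OrdLE (M i j) N) (hdet : (P.coeffMatrix M N).det ≠ 0)
    (hcleared : ∀ i j, j < i → j < c → M i j = 0) :
    Det M = ((P.coeffMatrix M N).det, N * ℓ) := by
  obtain ⟨p, hcp, hp⟩ := Matrix.exists_le_apply_ne_zero_of_det_ne_zero hdet c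
    fun i j hji hjc => by simp [coeffMatrix, hcleared i j hji hjc]
  rcases eq_or_ne c p with rfl | hcp'
  · exact hDet.eq_det_coeffMatrix_of_pivot hnext Finset.univ hM hdet hcleared
      (isUnit_iff_ne_zero.mpr hp) fun i _ hi => absurd (Finset.mem_univ i) hi
  refine hDet.eq_det_coeffMatrix_of_swap hcp' (hDet.eq_det_coeffMatrix_of_pivot hnext
    Finset.univ (fun i j => hM _ _) (by rwa [det_coeffMatrix_swap hcp', neg_ne_zero])
    (fun i j hji hjc => hcleared _ _ ?_ hjc) (by simpa [coeffMatrix] using hp)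
    fun i _ hi => absurd (Finset.mem_univ i) hi)
  rw [id, Equiv.swap_apply_def]
  split_ifs <;> order

lemma eq_det_coeffMatrix (hDet : P.IsDieudonneDet ℓ Det) {k : ℕ} (hk : k ≤ ℓ)
    (hM : ∀ i j, P.OrdLE (M i j) N) (hdet : (P.coeffMatrix M N).det ≠ 0)
    (hcleared : ∀ i j : Fin ℓ, j < i → (j : ℕ) < k → M i j = 0) :
    Det M = ((P.coeffMatrix M N).det, N * ℓ) := by
  induction hk using Nat.decreasingInduction generalizing M with
  | self =>
    exact hDet.eq_det_coeffMatrix_of_upperTriangular hM hdet fun i j hji =>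
      hcleared i j hji j.2
  | of_succ k hk ih =>
    exact hDet.eq_det_coeffMatrix_of_column (c := ⟨k, hk⟩)
      (fun M' hM' hdet' h => ih hM' hdet' fun i j hji hj => h i j hji (Nat.lt_succ_iff.mp hj))
      hM hdet hcleared

end Field

end PseudoDiffOps.IsDieudonneDet

theorem dieudonneDet_of_invertible_leading_matrix_general {K : Type} [Field K]
    {δ : K → K} (P : PseudoDiffOps K δ) (ℓ : ℕ)
    (Det : Matrix (Fin ℓ) (Fin ℓ) P.carrier → K × ℤ)
    (hDet : P.IsDieudonneDet ℓ Det)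
    (A : Matrix (Fin ℓ) (Fin ℓ) P.carrier) (N : ℤ)
    (hord : ∀ i j, ∀ n : ℤ, N < n → P.coeff (A i j) n = 0)
    (hlead : IsUnit (Matrix.of fun i j => P.coeff (A i j) N)) :
    Det A = ((Matrix.of fun i j => P.coeff (A i j) N).det, N * ℓ) :=
  hDet.eq_det_coeffMatrix ℓ.zero_le hord ((Matrix.isUnit_iff_isUnit_det _).mp hlead).ne_zero
    fun _ _ _ h => absurd h (Nat.not_lt_zero _)

/-- if all entries of `A ∈ Mat_{ℓ×ℓ} K((∂⁻¹))` have order at most `N`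
and the matrix `A_N` of coefficients of `∂^N` is invertible, then the Dieudonné
determinant of `A` is `det(A_N) λ^{Nℓ}`. -/
theorem dieudonneDet_of_invertible_leading_matrix {K : Type} [Field K] [CharZero K]
    {δ : K → K} (P : PseudoDiffOps K δ) (ℓ : ℕ)
    (Det : Matrix (Fin ℓ) (Fin ℓ) P.carrier → K × ℤ)
    (hDet : P.IsDieudonneDet ℓ Det)
    (A : Matrix (Fin ℓ) (Fin ℓ) P.carrier) (N : ℤ)
    (hord : ∀ i j, ∀ n : ℤ, N < n → P.coeff (A i j) n = 0)
    (hlead : IsUnit (Matrix.of fun i j => P.coeff (A i j) N)) :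
    Det A = ((Matrix.of fun i j => P.coeff (A i j) N).det, N * ℓ) :=
  dieudonneDet_of_invertible_leading_matrix_general P ℓ Det hDet A N hord hlead
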